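/- (Russian formula) With A a g-valued 1-form, v the ghost, F = dA + A², and the BRS operator δ given by δA = -dv - [A,v], δv = -v², one has (d+δ)(A+v) + (A+v)² = F. -/

import Mathlib

/-- `A` and `v` both have odd total degree, so the graded commutator `[A, v]` is `A * v + v * A`. -/
theorem russian_formula {Ω : Type*} [Ring Ω] (d δ : Ω →+ Ω) (A v : Ω)
    (hδA : δ A = -(d v) - (A * v + v * A))
    (hδv : δ v = -(v * v)) :
    (d (A + v) + δ (A + v)) + (A + v) * (A + v) = d A + A * A := by
  rw [map_add, map_add, hδA, hδv]
  noncomm_ring
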